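/- Suppose $X$ is a Banach space and $S(t,s) : X \to X$, $t \ge s$, is an evolution process. If $S$ is strongly pullback bounded dissipative and pullback asymptotically compact, and $B(\cdot)$ is a family of bounded subsets of $X$ such that for each $t \in \mathbb{R}$, $B(\cdot)$ pullback attracts bounded subsets of $X$ at time $\tau$ for each $\tau \le t$, then for each fixed $t$ the pullback omega-limit set $\omega(\bar B(t), t) = \bigcap_{\sigma \le t} \overline{\bigcup_{s \le \sigma} S(t,s) \bar B(t)}$ is nonempty and compact. -/
import Mathlib


open Filter Bornology

/-- An evolution process on a metric space `X`. -/
structure EvolProcess (X : Type*) [MetricSpace X] where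
  S : ℝ → ℝ → X → X
  idem : ∀ t x, S t t x = x
  comp : ∀ t τ s, s ≤ τ → τ ≤ t → ∀ x, S t s x = S t τ (S τ s x)
  cont : ∀ t s, Continuous (S t s)

/-- A process is pullback asymptotically compact. -/
def PullbackAsympCompact {X : Type*} [MetricSpace X] (P : EvolProcess X) : Prop :=
  ∀ (t : ℝ) (s : ℕ → ℝ) (x : ℕ → X), (∀ k, s k ≤ t) →
    Tendsto s atTop atBot → IsBounded (Set.range x) →
    ∃ (y : X) (φ : ℕ → ℕ), StrictMono φ ∧
      Tendsto (fun k => P.S t (s (φ k)) (x (φ k))) atTop (nhds y)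

/-- A process is strongly pullback bounded dissipative. -/
def StronglyPullbackDissipative {X : Type*} [MetricSpace X] (P : EvolProcess X) : Prop :=
  ∀ t : ℝ, ∃ B : Set X, IsBounded B ∧
    ∀ τ ≤ t, ∀ D : Set X, IsBounded D → ∀ ε > 0, ∃ s₀ : ℝ, s₀ ≤ τ ∧
      ∀ s ≤ s₀, ∀ x ∈ D, Metric.infDist (P.S τ s x) B < ε

/-- Theorem 2.9: existence of a nonempty compact pullback omega-limit set
`ω(cl B(t), t)`. -/
theorem omega_limit_nonempty_compact
    {X : Type*} [NormedAddCommGroup X] [NormedSpace ℝ X] [CompleteSpace X]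
    (P : EvolProcess X)
    (hdiss : StronglyPullbackDissipative P)
    (hac : PullbackAsympCompact P)
    (B : ℝ → Set X) (hBne : ∀ t, (B t).Nonempty) (hBbdd : ∀ t, IsBounded (B t))
    (hattr : ∀ t : ℝ, ∀ τ ≤ t, ∀ D : Set X, IsBounded D → ∀ ε > 0,
      ∃ s₀ : ℝ, s₀ ≤ τ ∧ ∀ s ≤ s₀, ∀ x ∈ D, Metric.infDist (P.S τ s x) (B t) < ε) :
    ∀ t : ℝ,
      (⋂ σ ≤ t, closure (⋃ s ≤ σ, P.S t s '' closure (B t))).Nonempty ∧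
      IsCompact (⋂ σ ≤ t, closure (⋃ s ≤ σ, P.S t s '' closure (B t))) := by
  
  intro t
  set ω := ⋂ σ ≤ t, closure (⋃ s ≤ σ, P.S t s '' closure (B t)) with hω
  -- sequences dominated by t - (k+1) tend to -∞
  have hsb : ∀ s : ℕ → ℝ, (∀ k, s k ≤ t - (k + 1)) → Tendsto s atTop atBot := by
    intro s hs
    refine tendsto_atBot.2 fun b => ?_
    obtain ⟨N, hN⟩ := exists_nat_gt (t - b)
    filter_upwards [eventually_ge_atTop N] with k hk
    have hk' : (N : ℝ) ≤ k := by exact_mod_cast hk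
    have := hs k
    linarith
  have hst : ∀ s : ℕ → ℝ, (∀ k, s k ≤ t - (k + 1)) → ∀ k, s k ≤ t := by
    intro s hs k
    have := hs k
    have : (0:ℝ) ≤ (k:ℝ) + 1 := by positivity
    linarith [hs k]
  -- key: limits of S t (s k) (x k) lie in ω
  have key : ∀ (s : ℕ → ℝ) (x : ℕ → X) (y : X),
      (∀ k, s k ≤ t - (k + 1)) → (∀ k, x k ∈ closure (B t)) →
      Tendsto (fun k => P.S t (s k) (x k)) atTop (nhds y) → y ∈ ω := by
    intro s x y hs hx hlim
    rw [hω]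
    refine Set.mem_iInter₂.2 fun σ hσ => ?_
    refine mem_closure_of_tendsto hlim ?_
    obtain ⟨N, hN⟩ := exists_nat_gt (t - σ)
    filter_upwards [eventually_ge_atTop N] with k hk
    have hk' : (N : ℝ) ≤ k := by exact_mod_cast hk
    have hsk : s k ≤ σ := by
      have := hs k
      linarith
    exact Set.mem_iUnion₂.2 ⟨s k, hsk, Set.mem_image_of_mem _ (hx k)⟩
  constructor
  · -- nonempty
    obtain ⟨x0, hx0⟩ := hBne t
    set s : ℕ → ℝ := fun k => t - (k + 1) with hsdef
    have hs : ∀ k, s k ≤ t - (k + 1) := fun k => le_rfl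
    have hxb : IsBounded (Set.range fun _ : ℕ => x0) :=
      Metric.isBounded_range_of_tendsto _ tendsto_const_nhds
    obtain ⟨y, φ, hφ, hlim⟩ := hac t s (fun _ => x0) (hst s hs) (hsb s hs) hxb
    refine ⟨y, key (fun k => s (φ k)) (fun _ => x0) y (fun k => ?_)
      (fun _ => subset_closure hx0) hlim⟩
    have h1 : (k : ℝ) ≤ (φ k : ℝ) := by exact_mod_cast hφ.le_apply
    simp only [hsdef]
    linarith
  · -- compact
    refine IsSeqCompact.isCompact ?_
    intro y hy
    have H : ∀ n : ℕ, ∃ (s : ℝ) (x : X), s ≤ t - (n + 1) ∧ x ∈ closure (B t) ∧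
        dist (y n) (P.S t s x) < 1 / (n + 1) := by
      intro n
      have h1 : y n ∈ closure (⋃ s ≤ t - (n + 1 : ℝ), P.S t s '' closure (B t)) := by
        have := Set.mem_iInter₂.1 (hy n) (t - (n + 1 : ℝ)) (by
          have : (0:ℝ) ≤ (n:ℝ) + 1 := by positivity
          linarith)
        exact this
      obtain ⟨b, hb, hbd⟩ := Metric.mem_closure_iff.1 h1 (1 / (n + 1)) (by positivity)
      obtain ⟨s, hs, x, hx, rfl⟩ := by
        simpa using Set.mem_iUnion₂.1 hb
      exact ⟨s, x, hs, hx, hbd⟩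
    choose s x hs hx hd using H
    have hxb : IsBounded (Set.range x) :=
      ((hBbdd t).closure).subset (Set.range_subset_iff.2 hx)
    obtain ⟨z, φ, hφ, hlim⟩ := hac t s x (hst s hs) (hsb s hs) hxb
    have hs' : ∀ k, s (φ k) ≤ t - (k + 1) := by
      intro k
      have h1 : (k : ℝ) ≤ (φ k : ℝ) := by exact_mod_cast hφ.le_apply
      have := hs (φ k)
      linarith
    refine ⟨z, key (fun k => s (φ k)) (fun k => x (φ k)) z hs' (fun k => hx (φ k)) hlim, φ,
      hφ, ?_⟩
    rw [tendsto_iff_dist_tendsto_zero]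
    have hzero : Tendsto (fun k : ℕ => 1 / ((k : ℝ) + 1) +
        dist (P.S t (s (φ k)) (x (φ k))) z) atTop (nhds 0) := by
      have h2 := (tendsto_iff_dist_tendsto_zero.1 hlim)
      simpa using tendsto_one_div_add_atTop_nhds_zero_nat.add h2
    refine squeeze_zero (fun k => dist_nonneg) (fun k => ?_) hzero
    have h1 : dist ((y ∘ φ) k) z ≤ dist (y (φ k)) (P.S t (s (φ k)) (x (φ k))) +
        dist (P.S t (s (φ k)) (x (φ k))) z := dist_triangle _ _ _
    have h2 : dist (y (φ k)) (P.S t (s (φ k)) (x (φ k))) ≤ 1 / ((k:ℝ) + 1) := by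
      have h3 := hd (φ k)
      have h4 : (k : ℝ) ≤ (φ k : ℝ) := by exact_mod_cast hφ.le_apply
      have h5 : 1 / ((φ k : ℝ) + 1) ≤ 1 / ((k : ℝ) + 1) := by
        apply one_div_le_one_div_of_le
        · positivity
        · linarith
      linarith
    calc dist ((y ∘ φ) k) z ≤ _ + _ := h1
      _ ≤ _ := by linarith
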